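/- arXiv:1504.07257 — 2 statements merged into one kernel-verified Lean document; each statement's English description precedes it below -/
import Mathlib

section
/- Let R be a ring such that 'C_R is a left denominator set of R and 'Q_{l,cl}(R) := 'C_R⁻¹R is a semisimple Artinian ring, and let a := ass_R('C_R). Then ζ_l(R, a) ⊆ a, where ζ_l(R, a) = {r ∈ R | Ir = 0 for some essential left ideal I of R with a ⊆ I} is the left singular ideal of R over a. -/
universe u

namespace Bavula

/-- The set of left regular elements of `R`. -/
def lReg (R : Type u) [Ring R] : Set R := {c : R | ∀ x : R, x * c = 0 → x = 0}

/-- The set of right regular elements of `R`. -/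
def rReg (R : Type u) [Ring R] : Set R := {c : R | ∀ x : R, c * x = 0 → x = 0}

/-- The set of regular elements of `R`. -/
def reg (R : Type u) [Ring R] : Set R := lReg R ∩ rReg R

/-- `S` is a multiplicative set of `R`. -/
def IsMulSet {R : Type u} [Ring R] (S : Set R) : Prop :=
  (1 : R) ∈ S ∧ (∀ a ∈ S, ∀ b ∈ S, a * b ∈ S) ∧ (0 : R) ∉ S

/-- `S` is a left Ore set of `R`. -/
def IsLeftOre {R : Type u} [Ring R] (S : Set R) : Prop :=
  IsMulSet S ∧ ∀ s ∈ S, ∀ r : R, ∃ s' ∈ S, ∃ r' : R, s' * r = r' * s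

/-- `S` is a left denominator set of `R`. -/
def IsLeftDenom {R : Type u} [Ring R] (S : Set R) : Prop :=
  IsLeftOre S ∧ ∀ r : R, ∀ s ∈ S, r * s = 0 → ∃ t ∈ S, t * r = 0

/-- `S` is a right Ore set of `R`. -/
def IsRightOre {R : Type u} [Ring R] (S : Set R) : Prop :=
  IsMulSet S ∧ ∀ s ∈ S, ∀ r : R, ∃ s' ∈ S, ∃ r' : R, r * s' = s * r'

/-- `S` is a right denominator set of `R`. -/
def IsRightDenom {R : Type u} [Ring R] (S : Set R) : Prop :=
  IsRightOre S ∧ ∀ r : R, ∀ s ∈ S, s * r = 0 → ∃ t ∈ S, r * t = 0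

/-- `ass_R(S) = {r ∈ R | s r = 0 for some s ∈ S}`. -/
def ass {R : Type u} [Ring R] (S : Set R) : Set R := {r : R | ∃ s ∈ S, s * r = 0}

/-- `{r ∈ R | r s = 0 for some s ∈ S}` (the right-sided analogue of `ass`). -/
def rass {R : Type u} [Ring R] (S : Set R) : Set R := {r : R | ∃ s ∈ S, r * s = 0}

/-- `S` is a (left) dense subset of `T`. -/
def DenseIn {R : Type u} [Ring R] (S T : Set R) : Prop := ∀ t ∈ T, ∃ r : R, r * t ∈ S

/-- `f : R →+* Q` realizes `Q` as the left localization `S⁻¹R` of `R` at `S`: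
elements of `S` become units, every element of `Q` is a left fraction `(f s)⁻¹ * (f r)`,
and the kernel of `f` is `ass S`. -/
def IsLeftLoc {R : Type u} [Ring R] (S : Set R) {Q : Type u} [Ring Q] (f : R →+* Q) : Prop :=
  (∀ s ∈ S, IsUnit (f s)) ∧
  (∀ q : Q, ∃ s ∈ S, ∃ r : R, f s * q = f r) ∧
  (∀ r : R, f r = 0 ↔ r ∈ ass S)

/-- `π : R →+* Q` realizes `Q` as the quotient of `R` by the set `a`
(in particular, `a` is then a two-sided ideal of `R`). -/
def IsQuotBy {R : Type u} [Ring R] (a : Set R) {Q : Type u} [Ring Q] (π : R →+* Q) : Prop :=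
  Function.Surjective π ∧ ∀ r : R, π r = 0 ↔ r ∈ a

/-- A semiprime ring (no nonzero nilpotent ideals), elementwise: `x R x = 0 → x = 0`. -/
def SemiprimeRing (A : Type u) [Ring A] : Prop := ∀ x : A, (∀ r : A, x * r * x = 0) → x = 0

/-- `a` is a two-sided ideal of `R`, given as a set. -/
def IsIdealSet {R : Type u} [Ring R] (a : Set R) : Prop :=
  (0 : R) ∈ a ∧ (∀ x ∈ a, ∀ y ∈ a, x + y ∈ a) ∧ ∀ r : R, ∀ x ∈ a, r * x ∈ a ∧ x * r ∈ a

/-- `a` is a semiprime (two-sided) ideal of `R`, i.e. `R/a` is a semiprime ring. -/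
def IsSemiprimeIdealSet {R : Type u} [Ring R] (a : Set R) : Prop :=
  IsIdealSet a ∧ ∀ x : R, (∀ r : R, x * r * x ∈ a) → x ∈ a

/-- `a` is a prime (two-sided) ideal of `R`, i.e. `R/a` is a prime ring. -/
def IsPrimeIdealSet {R : Type u} [Ring R] (a : Set R) : Prop :=
  IsIdealSet a ∧ a ≠ Set.univ ∧ ∀ x y : R, (∀ r : R, x * r * y ∈ a) → x ∈ a ∨ y ∈ a

/-- The prime radical of `A`: the intersection of all prime ideals of `A`. -/
def primeRadical (A : Type u) [Ring A] : Set A :=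
  {x : A | ∀ p : Set A, IsPrimeIdealSet p → x ∈ p}

/-- The set of prime ideals of `R` minimal over `a`. -/
def minPrimesOver {R : Type u} [Ring R] (a : Set R) : Set (Set R) :=
  {p : Set R | IsPrimeIdealSet p ∧ a ⊆ p ∧
    ∀ q : Set R, IsPrimeIdealSet q → a ⊆ q → q ⊆ p → q = p}

/-- A simple ring: nontrivial, with no two-sided ideals other than `0` and `A`. -/
def SimpleRing (A : Type u) [Ring A] : Prop :=
  (0 : A) ≠ 1 ∧ ∀ a : Set A, IsIdealSet a → a = {0} ∨ a = Set.univ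

/-- A simple (left) Artinian ring. -/
def SimpleArtinianRing (A : Type u) [Ring A] : Prop := SimpleRing A ∧ IsArtinianRing A

/-- `I` is an essential left ideal of `R`. -/
def EssIdeal {R : Type u} [Ring R] (I : Submodule R R) : Prop :=
  ∀ J : Submodule R R, J ≠ ⊥ → I ⊓ J ≠ ⊥

/-- `N` is an essential submodule of the left ideal `M`. -/
def EssIn {R : Type u} [Ring R] (N M : Submodule R R) : Prop :=
  N ≤ M ∧ ∀ W : Submodule R R, W ≤ M → W ≠ ⊥ → N ⊓ W ≠ ⊥

/-- `U` is a uniform left ideal of `R`. -/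
def UniformIdeal {R : Type u} [Ring R] (U : Submodule R R) : Prop :=
  U ≠ ⊥ ∧ ∀ V W : Submodule R R, V ≤ U → W ≤ U → V ≠ ⊥ → W ≠ ⊥ → V ⊓ W ≠ ⊥

/-- `udim(_A A) < ∞`: there is a finite direct sum of uniform left ideals of `A`
which is an essential left ideal of `A`. -/
def FinUdim (A : Type u) [Ring A] : Prop :=
  ∃ (n : ℕ) (U : Fin (n + 1) → Submodule A A),
    (∀ i, UniformIdeal (U i)) ∧
    (∀ i, U i ⊓ (⨆ j, ⨆ (_ : j ≠ i), U j) = ⊥) ∧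
    EssIdeal (⨆ i, U i)

/-- `'C_V = {v ∈ V | right multiplication by v is injective on V}` for a left ideal `V`. -/
def lRegIn {R : Type u} [Ring R] (V : Submodule R R) : Set R :=
  {v : R | v ∈ V ∧ ∀ x ∈ V, x * v = 0 → x = 0}

/-- The family `P` of subsets of `R` satisfies the ascending chain condition. -/
def AccOnSets {R : Type u} [Ring R] (P : Set (Set R)) : Prop :=
  ∀ f : ℕ → Set R, (∀ n, f n ∈ P) → (∀ n, f n ⊆ f (n + 1)) →
    ∃ N : ℕ, ∀ n : ℕ, N ≤ n → f n = f N

/-- The left annihilator of `X` in `R`. -/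
def lAnn {R : Type u} [Ring R] (X : Set R) : Set R := {r : R | ∀ x ∈ X, r * x = 0}

/-- The right annihilator of `X` in `R`. -/
def rAnn {R : Type u} [Ring R] (X : Set R) : Set R := {r : R | ∀ x ∈ X, x * r = 0}

/-- A left Goldie ring: a.c.c. on left annihilators and finite left uniform dimension. -/
def LeftGoldie (A : Type u) [Ring A] : Prop :=
  AccOnSets {B : Set A | ∃ X : Set A, B = lAnn X} ∧ FinUdim A

/-- The set of maximal left denominator sets of `A`. -/
def maxLeftDenom (A : Type u) [Ring A] : Set (Set A) :=
  {S : Set A | IsLeftDenom S ∧ ∀ T : Set A, IsLeftDenom T → S ⊆ T → S = T}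

/-- `S_p = {c ∈ R | c + p ∈ C_{R/p}}`: the elements regular modulo `p`. -/
def regMod {R : Type u} [Ring R] (p : Set R) : Set R :=
  {c : R | (∀ x : R, x * c ∈ p → x ∈ p) ∧ ∀ x : R, c * x ∈ p → x ∈ p}

/-- `I` is a right ideal of `R`, given as a set. -/
def IsRightIdealSet {R : Type u} [Ring R] (I : Set R) : Prop :=
  (0 : R) ∈ I ∧ (∀ x ∈ I, ∀ y ∈ I, x + y ∈ I) ∧ ∀ x ∈ I, ∀ r : R, x * r ∈ I

/-- The left singular ideal `ζ_l(R, a)` of `R` over `a`. -/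
def leftSingularOver {R : Type u} [Ring R] (a : Set R) : Set R :=
  {r : R | ∃ I : Submodule R R, EssIdeal I ∧ a ⊆ I ∧ ∀ x ∈ I, x * r = 0}

/-
Let `ζ = ζ_l(R, a)`. The left fractions `f(s)⁻¹ f(w)` with `w ∈ ζ` form a two-sided ideal `T`
of `Q`: this uses the left Ore condition and that `ζ` is a left ideal closed under right
multiplication and under cancelling left regular factors on the right. As `Q` is semisimple,
`T = Q e` with `e` idempotent, and `e q e = e q` because `T` is also a right ideal. Writing
`f(w) = f(s) e` with `w ∈ ζ`, the image `p = f(w)` satisfies `q p p = 0 → q p = 0`. Since `w` is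
killed by an essential left ideal `I ⊇ a = ker f`, this forces `R w² ∩ I = 0`, so `w² = 0`, hence
`p = 0`, `e = 0` and `f(ζ) ⊆ T = 0`.
-/

section LeftSingular

variable {R : Type u} [Ring R]

theorem essIdeal_iff {I : Submodule R R} :
    EssIdeal I ↔ ∀ x : R, x ≠ 0 → ∃ r : R, r * x ≠ 0 ∧ r * x ∈ I := by
  constructor
  · intro hI x hx
    have hspan : Submodule.span R {x} ≠ ⊥ := by
      rwa [Ne, Submodule.span_singleton_eq_bot]
    obtain ⟨y, ⟨hyI, hyx⟩, hy⟩ := Submodule.ne_bot_iff _ |>.mp (hI _ hspan)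
    obtain ⟨r, rfl⟩ := Submodule.mem_span_singleton.mp hyx
    exact ⟨r, hy, hyI⟩
  · intro hI J hJ
    obtain ⟨x, hxJ, hx⟩ := Submodule.ne_bot_iff _ |>.mp hJ
    obtain ⟨r, hrx, hrxI⟩ := hI x hx
    exact Submodule.ne_bot_iff _ |>.mpr ⟨r * x, ⟨hrxI, J.smul_mem r hxJ⟩, hrx⟩

theorem EssIdeal.inf {I I' : Submodule R R} (hI : EssIdeal I) (hI' : EssIdeal I') :
    EssIdeal (I ⊓ I') := by
  rw [essIdeal_iff] at hI hI' ⊢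
  intro x hx
  obtain ⟨r, hrx, hrxI⟩ := hI x hx
  obtain ⟨r', hr'rx, hr'rxI'⟩ := hI' _ hrx
  refine ⟨r' * r, ?_, ?_, ?_⟩ <;> rw [mul_assoc]
  exacts [hr'rx, I.smul_mem r' hrxI, hr'rxI']

theorem EssIdeal.comap_toSpanSingleton {I : Submodule R R} (hI : EssIdeal I) (r : R) :
    EssIdeal (I.comap (LinearMap.toSpanSingleton R R r)) := by
  rw [essIdeal_iff] at hI ⊢
  intro x hx
  simp only [Submodule.mem_comap, LinearMap.toSpanSingleton_apply, smul_eq_mul]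
  by_cases hxr : x * r = 0
  · exact ⟨1, by rwa [one_mul], by rw [one_mul, hxr]; exact I.zero_mem⟩
  · obtain ⟨t, htxr, htxrI⟩ := hI _ hxr
    rw [← mul_assoc] at htxr htxrI
    exact ⟨t, fun h => htxr (by rw [h, zero_mul]), htxrI⟩

theorem mul_mem_ass {S : Set R} {x : R} (hx : x ∈ ass S) (r : R) : x * r ∈ ass S := by
  obtain ⟨s, hs, hsx⟩ := hx
  exact ⟨s, hs, by rw [← mul_assoc, hsx, zero_mul]⟩

variable {a : Set R} {ρ σ : R}

theorem zero_mem_leftSingularOver : (0 : R) ∈ leftSingularOver a :=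
  ⟨⊤, fun J hJ => by rwa [top_inf_eq], fun _ _ => trivial, fun x _ => mul_zero x⟩

theorem add_mem_leftSingularOver (hρ : ρ ∈ leftSingularOver a) (hσ : σ ∈ leftSingularOver a) :
    ρ + σ ∈ leftSingularOver a := by
  obtain ⟨I, hI, haI, hIρ⟩ := hρ
  obtain ⟨I', hI', haI', hI'σ⟩ := hσ
  refine ⟨I ⊓ I', hI.inf hI', fun x hx => ⟨haI hx, haI' hx⟩, fun x hx => ?_⟩
  rw [mul_add, hIρ x hx.1, hI'σ x hx.2, add_zero]

theorem mul_mem_leftSingularOver_right (hρ : ρ ∈ leftSingularOver a) (r : R) :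
    ρ * r ∈ leftSingularOver a := by
  obtain ⟨I, hI, haI, hIρ⟩ := hρ
  exact ⟨I, hI, haI, fun x hx => by rw [← mul_assoc, hIρ x hx, zero_mul]⟩

theorem mem_leftSingularOver_of_mul_mem {t : R} (ht : t ∈ lReg R)
    (hρt : ρ * t ∈ leftSingularOver a) : ρ ∈ leftSingularOver a := by
  obtain ⟨I, hI, haI, hIρt⟩ := hρt
  exact ⟨I, hI, haI, fun x hx => ht _ (by rw [mul_assoc]; exact hIρt x hx)⟩

theorem mul_mem_leftSingularOver_ass_left {S : Set R} (r : R)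
    (hρ : ρ ∈ leftSingularOver (ass S)) : r * ρ ∈ leftSingularOver (ass S) := by
  obtain ⟨I, hI, haI, hIρ⟩ := hρ
  refine ⟨I.comap (LinearMap.toSpanSingleton R R r), hI.comap_toSpanSingleton r,
    fun x hx => ?_, fun x hx => ?_⟩ <;>
    simp only [SetLike.mem_coe, Submodule.mem_comap, LinearMap.toSpanSingleton_apply,
      smul_eq_mul] at hx ⊢
  · exact haI (mul_mem_ass hx r)
  · rw [← mul_assoc]
    exact hIρ _ hx

end LeftSingular

theorem IsSemisimpleRing.exists_mem_forall_mul_eq_self {Q : Type*} [Ring Q] [IsSemisimpleRing Q]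
    (I : Ideal Q) : ∃ e ∈ I, ∀ x ∈ I, x * e = x := by
  obtain ⟨e, he, rfl⟩ := IsSemisimpleRing.ideal_eq_span_idempotent I
  refine ⟨e, Ideal.subset_span rfl, fun x hx => ?_⟩
  obtain ⟨c, rfl⟩ := Ideal.mem_span_singleton'.mp hx
  rw [mul_assoc, he.eq]

theorem mul_eq_zero_of_mul_mul_eq_zero {Q : Type*} [Ring Q] {e u : Q}
    (he : ∀ q, e * q * e = e * q) (hu : IsUnit u) {q : Q} (h : q * (u * e) * (u * e) = 0) :
    q * (u * e) = 0 := by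
  have : q * (u * e) * (u * e) = q * (u * e) * u :=
    calc q * (u * e) * (u * e) = q * u * (e * u * e) := by simp only [mul_assoc]
      _ = q * (u * e) * u := by rw [he]; simp only [mul_assoc]
  rwa [this, hu.mul_left_eq_zero] at h

section Localization

variable {R Q : Type u} [Ring R] [Ring Q] (f : R →+* Q)

theorem eq_zero_of_mem_leftSingularOver {a : Set R} (hker : ∀ r, f r = 0 → r ∈ a) {w : R}
    (hw : w ∈ leftSingularOver a) (hcancel : ∀ q : Q, q * f w * f w = 0 → q * f w = 0) :
    f w = 0 := by
  obtain ⟨I, hI, haI, hIw⟩ := hw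
  by_contra hfw
  have hww : w * w ≠ 0 := fun h => hfw <| by
    simpa using hcancel 1 (by rw [one_mul, ← map_mul, h, map_zero])
  obtain ⟨x, hxww, hxwwI⟩ := essIdeal_iff.mp hI _ hww
  -- `x w² ∈ I` is killed by `w`, so `f(x w) = 0`; thus `x w ∈ a ⊆ I` and `x w² = 0`.
  have hfxw : f (x * w) = 0 := by
    have h := congrArg f (hIw _ hxwwI)
    simp only [map_mul, map_zero, ← mul_assoc] at h
    simpa using hcancel _ (hcancel _ h)
  exact hxww (by rw [← mul_assoc]; exact hIw _ (haI (hker _ hfxw)))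

def leftSingularFractions (hore : IsLeftOre (lReg R))
    (hfrac : ∀ q : Q, ∃ s ∈ lReg R, ∃ r : R, f s * q = f r) : Ideal Q where
  carrier := {q | ∃ s ∈ lReg R, ∃ w ∈ leftSingularOver (ass (lReg R)), f s * q = f w}
  zero_mem' := ⟨1, hore.1.1, 0, zero_mem_leftSingularOver, by simp⟩
  add_mem' := by
    rintro q q' ⟨s, hs, w, hw, hq⟩ ⟨s', hs', w', hw', hq'⟩
    obtain ⟨s'', hs'', r, hsr⟩ := hore.2 s' hs' s
    refine ⟨s'' * s, hore.1.2.1 _ hs'' _ hs, s'' * w + r * w',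
      add_mem_leftSingularOver (mul_mem_leftSingularOver_ass_left _ hw)
        (mul_mem_leftSingularOver_ass_left _ hw'), ?_⟩
    calc f (s'' * s) * (q + q') = f (s'' * s) * q + f (r * s') * q' := by rw [mul_add, ← hsr]
      _ = f (s'' * w + r * w') := by simp only [map_mul, mul_assoc, hq, hq', map_add]
  smul_mem' := by
    rintro c q ⟨s, hs, w, hw, hq⟩
    obtain ⟨t, ht, r, htc⟩ := hfrac c
    obtain ⟨s₁, hs₁, r₁, hsr⟩ := hore.2 s hs r
    refine ⟨s₁ * t, hore.1.2.1 _ hs₁ _ ht, r₁ * w, mul_mem_leftSingularOver_ass_left _ hw, ?_⟩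
    calc f (s₁ * t) * (c • q) = f (s₁ * r) * q := by
          rw [smul_eq_mul, map_mul, map_mul, mul_assoc, ← mul_assoc (f t), htc, ← mul_assoc]
      _ = f (r₁ * w) := by rw [hsr, map_mul, map_mul, mul_assoc, hq]

variable {f} {hore : IsLeftOre (lReg R)} {hfrac : ∀ q : Q, ∃ s ∈ lReg R, ∃ r : R, f s * q = f r}

theorem map_mem_leftSingularFractions {ρ : R} (hρ : ρ ∈ leftSingularOver (ass (lReg R))) :
    f ρ ∈ leftSingularFractions f hore hfrac :=
  ⟨1, hore.1.1, ρ, hρ, by rw [map_one, one_mul]⟩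

theorem mul_mem_leftSingularFractions {q : Q} (hq : q ∈ leftSingularFractions f hore hfrac)
    (c : Q) : q * c ∈ leftSingularFractions f hore hfrac := by
  obtain ⟨s, hs, w, hw, hq⟩ := hq
  obtain ⟨t, ht, r, htc⟩ := hfrac c
  obtain ⟨s₁, hs₁, r₁, hsr⟩ := hore.2 t ht w
  have hr₁ : r₁ ∈ leftSingularOver (ass (lReg R)) :=
    mem_leftSingularOver_of_mul_mem ht (hsr ▸ mul_mem_leftSingularOver_ass_left s₁ hw)
  refine ⟨s₁ * s, hore.1.2.1 _ hs₁ _ hs, r₁ * r, mul_mem_leftSingularOver_right hr₁ r, ?_⟩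
  calc f (s₁ * s) * (q * c) = f (s₁ * w) * c := by
        rw [map_mul, map_mul, mul_assoc, ← mul_assoc (f s), hq, ← mul_assoc]
    _ = f (r₁ * r) := by rw [hsr, map_mul, map_mul, mul_assoc, htc]

end Localization

/-- Proposition a2Mar2015: if `'Q_{l,cl}(R)` is a semisimple Artinian ring and
`a = ass_R('C_R)`, then `ζ_l(R, a) ⊆ a`. -/
theorem leftSingularOver_subset_ass {R : Type u} [Ring R]
    (hden : IsLeftDenom (lReg R))
    (Q : Type u) [Ring Q] (f : R →+* Q)
    (hloc : IsLeftLoc (lReg R) f) (hss : IsSemisimpleRing Q) :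
    leftSingularOver (ass (lReg R)) ⊆ ass (lReg R) := by
  intro ρ hρ
  let T := leftSingularFractions f hden.1 hloc.2.1
  obtain ⟨e, heT, he⟩ := IsSemisimpleRing.exists_mem_forall_mul_eq_self T
  have hidem (q : Q) : e * q * e = e * q := he _ (mul_mem_leftSingularFractions heT q)
  obtain ⟨s, hs, w, hw, hsew⟩ := heT
  have hu := hloc.1 s hs
  have hw0 : f w = 0 := eq_zero_of_mem_leftSingularOver f (fun r => (hloc.2.2 r).mp) hw
    (fun q => hsew ▸ mul_eq_zero_of_mul_mul_eq_zero hidem hu)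
  have he0 : e = 0 := hu.mul_right_eq_zero.mp (hsew.trans hw0)
  apply (hloc.2.2 ρ).mp
  rw [← he _ (map_mem_leftSingularFractions hρ), he0, mul_zero]

end Bavula
end

section
/- Suppose that S and T are left denominator sets of a ring R with S ⊆ T, and let φ : S⁻¹R → T⁻¹R, s⁻¹r ↦ s⁻¹r, be the induced ring homomorphism. Then: (1) φ is a monomorphism if and only if ass_R(S) = ass_R(T); (2) φ is an epimorphism if and only if for each t ∈ T there exists r ∈ R with rt ∈ S + ass_R(T); (3) φ is an isomorphism if and only if ass_R(S) = ass_R(T) and for each t ∈ T there exists r ∈ R with rt ∈ S; (4) if in addition T ⊆ 'C_R, then φ is an isomorphism if and only if ass_R(S) = ass_R(T) and for each t ∈ T there exists r ∈ 'C_R with rt ∈ S. -/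
universe u

namespace Bavula

/-! Everything is read off the fraction description of the two localizations. The kernel of
`f₂ = φ ∘ f₁` is `ass T`, and a left fraction `(f₁ s)⁻¹ f₁ r` is killed by `φ` exactly when
`r ∈ ass T`, which gives (1). The image of `φ` consists of the fractions `(f₂ s)⁻¹ f₂ r` with
`s ∈ S`; since `T⁻¹R` is generated over `f₂ R` by the inverses `(f₂ t)⁻¹`, `φ` is onto iff each of
them is such a fraction, i.e. `f₂ s = f₂ (r t)`, i.e. `r t ∈ S + ass T`, which is (2). Once
`ass S = ass T`, an element `s + a` with `s' a = 0` is moved into `S` by multiplying with `s'`,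
which gives (3), and (4) follows since a left factor of a left regular element is left regular. -/

open scoped Pointwise

section

variable {R : Type u} [Ring R] {S T : Set R}

theorem IsLeftLoc.map_eq_map_iff {Q : Type u} [Ring Q] {f : R →+* Q} (h : IsLeftLoc T f)
    {a b : R} : f a = f b ↔ a - b ∈ ass T := by
  rw [← h.2.2, map_sub, sub_eq_zero]

theorem IsLeftLoc.mem_add_ass_iff {Q : Type u} [Ring Q] {f : R →+* Q} (h : IsLeftLoc T f)
    {x : R} : x ∈ S + ass T ↔ ∃ s ∈ S, f x = f s := by
  simp only [Set.mem_add, h.map_eq_map_iff]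
  constructor
  · rintro ⟨s, hs, a, ha, rfl⟩
    exact ⟨s, hs, by simpa using ha⟩
  · rintro ⟨s, hs, ha⟩
    exact ⟨s, hs, _, ha, add_sub_cancel s x⟩

theorem exists_mul_mem_of_mem_add_ass (hS : ∀ a ∈ S, ∀ b ∈ S, a * b ∈ S) {x : R}
    (hx : x ∈ S + ass S) : ∃ s ∈ S, s * x ∈ S := by
  obtain ⟨s, hs, a, ⟨s', hs', hs'a⟩, rfl⟩ := hx
  exact ⟨s', hs', by simpa [mul_add, hs'a] using hS s' hs' s hs⟩

theorem denseIn_add_ass_iff (hS : ∀ a ∈ S, ∀ b ∈ S, a * b ∈ S) :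
    DenseIn (S + ass S) T ↔ DenseIn S T := by
  refine ⟨fun h t ht => ?_, fun h t ht => ?_⟩
  · obtain ⟨r, hr⟩ := h t ht
    obtain ⟨s, hs, hsr⟩ := exists_mul_mem_of_mem_add_ass hS hr
    exact ⟨s * r, by rwa [mul_assoc]⟩
  · obtain ⟨r, hr⟩ := h t ht
    exact ⟨r, r * t, hr, 0, ⟨r * t, hr, mul_zero _⟩, add_zero _⟩

theorem mem_lReg_of_mul_mem_lReg {r t : R} (h : r * t ∈ lReg R) : r ∈ lReg R :=
  fun x hx => h x (by rw [← mul_assoc, hx, zero_mul])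

theorem denseIn_iff_exists_mem_lReg (hS : S ⊆ lReg R) :
    DenseIn S T ↔ ∀ t ∈ T, ∃ r ∈ lReg R, r * t ∈ S :=
  forall₂_congr fun _ _ =>
    ⟨fun ⟨r, hr⟩ => ⟨r, mem_lReg_of_mul_mem_lReg (hS hr), hr⟩,
      fun ⟨r, _, hr⟩ => ⟨r, hr⟩⟩

end

section

variable {R Q₁ Q₂ : Type u} [Ring R] [Ring Q₁] [Ring Q₂] {S T : Set R}
  {f₁ : R →+* Q₁} {f₂ : R →+* Q₂} {φ : Q₁ →+* Q₂}

theorem injective_iff_ass_eq (h₁ : IsLeftLoc S f₁) (h₂ : IsLeftLoc T f₂)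
    (hφ : ∀ r, φ (f₁ r) = f₂ r) : Function.Injective φ ↔ ass S = ass T := by
  have hker : ∀ r, f₁ r = 0 → f₂ r = 0 := fun r hr => by rw [← hφ, hr, map_zero]
  constructor
  · refine fun hinj => Set.ext fun r => ?_
    rw [← h₁.2.2, ← h₂.2.2]
    exact ⟨hker r, fun hr => hinj (by rw [hφ, hr, map_zero])⟩
  · refine fun hass => (injective_iff_map_eq_zero φ).2 fun q hq => ?_
    obtain ⟨s, hs, r, hsr⟩ := h₁.2.1 q
    have hr : f₂ r = 0 := by rw [← hφ, ← hsr, map_mul, hq, mul_zero]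
    rw [h₂.2.2, ← hass, ← h₁.2.2, ← hsr] at hr
    exact (h₁.1 s hs).mul_right_eq_zero.1 hr

theorem mem_range_iff_exists_mul_eq (h₁ : IsLeftLoc S f₁) (hφ : ∀ r, φ (f₁ r) = f₂ r)
    {q : Q₂} : q ∈ φ.range ↔ ∃ s ∈ S, ∃ r, f₂ s * q = f₂ r := by
  constructor
  · rintro ⟨p, rfl⟩
    obtain ⟨s, hs, r, hsr⟩ := h₁.2.1 p
    exact ⟨s, hs, r, by rw [← hφ, ← hφ, ← map_mul, hsr]⟩
  · rintro ⟨s, hs, r, hsr⟩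
    obtain ⟨w, hw⟩ := (h₁.1 s hs).exists_left_inv
    refine ⟨w * f₁ r, ?_⟩
    rw [map_mul, hφ, ← hsr, ← mul_assoc, ← hφ, ← map_mul, hw, map_one, one_mul]

theorem surjective_iff_inverse_mem_range (h₂ : IsLeftLoc T f₂)
    (hφ : ∀ r, φ (f₁ r) = f₂ r) :
    Function.Surjective φ ↔ ∀ t ∈ T, Ring.inverse (f₂ t) ∈ φ.range := by
  refine ⟨fun hφs t _ => hφs _, fun hinv q => ?_⟩
  obtain ⟨t, ht, r, htr⟩ := h₂.2.1 q
  have hq : q = Ring.inverse (f₂ t) * f₂ r :=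
    ((Ring.inverse_mul_eq_iff_eq_mul _ _ _ (h₂.1 t ht)).2 htr.symm).symm
  rw [hq]
  exact φ.range.mul_mem (hinv t ht) ⟨f₁ r, hφ r⟩

theorem inverse_mem_range_iff (h₁ : IsLeftLoc S f₁) (h₂ : IsLeftLoc T f₂)
    (hφ : ∀ r, φ (f₁ r) = f₂ r) {t : R} (ht : t ∈ T) :
    Ring.inverse (f₂ t) ∈ φ.range ↔ ∃ r, r * t ∈ S + ass T := by
  have hfrac : ∀ s r, f₂ s * Ring.inverse (f₂ t) = f₂ r ↔ f₂ (r * t) = f₂ s := by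
    intro s r
    rw [eq_comm, Ring.eq_mul_inverse_iff_mul_eq _ _ _ (h₂.1 t ht), map_mul]
  simp only [mem_range_iff_exists_mul_eq h₁ hφ, hfrac, h₂.mem_add_ass_iff]
  exact ⟨fun ⟨s, hs, r, h⟩ => ⟨r, s, hs, h⟩, fun ⟨r, s, hs, h⟩ => ⟨s, hs, r, h⟩⟩

theorem surjective_iff_denseIn_add_ass (h₁ : IsLeftLoc S f₁) (h₂ : IsLeftLoc T f₂)
    (hφ : ∀ r, φ (f₁ r) = f₂ r) : Function.Surjective φ ↔ DenseIn (S + ass T) T := by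
  rw [surjective_iff_inverse_mem_range h₂ hφ]
  exact forall₂_congr fun t ht => inverse_mem_range_iff h₁ h₂ hφ ht

end

open scoped Pointwise in
theorem inducedHom_between_localizations_general {R : Type u} [Ring R]
    (S T : Set R) (hS : IsLeftDenom S) (hST : S ⊆ T)
    (Q1 : Type u) [Ring Q1] (f1 : R →+* Q1) (h1 : IsLeftLoc S f1)
    (Q2 : Type u) [Ring Q2] (f2 : R →+* Q2) (h2 : IsLeftLoc T f2)
    (φ : Q1 →+* Q2) (hφ : ∀ r : R, φ (f1 r) = f2 r) :
    -- (1)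
    (Function.Injective φ ↔ ass S = ass T) ∧
    -- (2)
    (Function.Surjective φ ↔ ∀ t ∈ T, ∃ r : R, r * t ∈ S + ass T) ∧
    -- (3)
    (Function.Bijective φ ↔
      (ass S = ass T ∧ ∀ t ∈ T, ∃ r : R, r * t ∈ S)) ∧
    -- (4)
    (T ⊆ lReg R →
      (Function.Bijective φ ↔
        (ass S = ass T ∧ ∀ t ∈ T, ∃ r ∈ lReg R, r * t ∈ S))) := by
  have hinj := injective_iff_ass_eq h1 h2 hφ
  have hsurj := surjective_iff_denseIn_add_ass h1 h2 hφ
  have hbij : Function.Bijective φ ↔ ass S = ass T ∧ DenseIn S T := by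
    rw [Function.Bijective, hinj, hsurj]
    exact and_congr_right fun hass => hass ▸ denseIn_add_ass_iff hS.1.1.2.1
  refine ⟨hinj, hsurj, hbij, fun hTreg => ?_⟩
  rw [hbij, denseIn_iff_exists_mem_lReg (hST.trans hTreg)]

open scoped Pointwise in
/-- Lemma a7Mar15: for left denominator sets `S ⊆ T` of `R`, the induced homomorphism
`φ : S⁻¹R → T⁻¹R` is injective/surjective/bijective iff the stated conditions hold. -/
theorem inducedHom_between_localizations {R : Type u} [Ring R]
    (S T : Set R) (hS : IsLeftDenom S) (hT : IsLeftDenom T) (hST : S ⊆ T)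
    (Q1 : Type u) [Ring Q1] (f1 : R →+* Q1) (h1 : IsLeftLoc S f1)
    (Q2 : Type u) [Ring Q2] (f2 : R →+* Q2) (h2 : IsLeftLoc T f2)
    (φ : Q1 →+* Q2) (hφ : ∀ r : R, φ (f1 r) = f2 r) :
    -- (1)
    (Function.Injective φ ↔ ass S = ass T) ∧
    -- (2)
    (Function.Surjective φ ↔ ∀ t ∈ T, ∃ r : R, r * t ∈ S + ass T) ∧
    -- (3)
    (Function.Bijective φ ↔
      (ass S = ass T ∧ ∀ t ∈ T, ∃ r : R, r * t ∈ S)) ∧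
    -- (4)
    (T ⊆ lReg R →
      (Function.Bijective φ ↔
        (ass S = ass T ∧ ∀ t ∈ T, ∃ r ∈ lReg R, r * t ∈ S))) :=
  inducedHom_between_localizations_general S T hS hST Q1 f1 h1 Q2 f2 h2 φ hφ

end Bavula
end
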